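/- Let q be an odd prime power, n odd, and α a non-square in F_q. The number of isotropic points of PG(n,q) with respect to Q(x_0,...,x_n) = x_0^2 - x_1^2 + x_2^2 - ... + (-1)^n α x_n^2 equals q^{n-1} + q^{n-2} + ... + q + 1 - q^{(n-1)/2}. -/

import Mathlib

/-!
Over `𝔽_q` with `q` odd, substituting `(x + y, x - y)` and counting `x y = b` shows that
`x² - y² = b` has `2q - 1` solutions for `b = 0` and `q - 1` otherwise. Hence if `g` is a form in
`m` variables with `Z` zeros, `x² - y² + g` has `Z'` zeros where `Z' + q^m = q^(m+1) + q Z`.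
For `n = 2k + 1` the form `Q` is `k` hyperbolic planes plus the anisotropic plane `x² - α y²`,
whose only zero is `0`; induction on `k` gives `q^n + q^k - q^(k+1)` isotropic vectors, and
removing `0` and dividing by `q - 1` counts the isotropic points.
-/

/-- The quadratic form `Q(x) = x₀² - x₁² + x₂² - ⋯ + (-1)ⁿ α xₙ²` on `F^{n+1}`. -/
def Qn (F : Type) [Field F] (n : ℕ) (α : F) (v : Fin (n + 1) → F) : F :=
  ∑ i : Fin (n + 1), (-1 : F) ^ (i : ℕ) * (if (i : ℕ) = n then α else 1) * v i ^ 2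

open scoped LinearAlgebra.Projectivization

lemma FiniteField.two_ne_zero_of_odd_card {F : Type*} [Field F] [Fintype F]
    (h : Odd (Fintype.card F)) : (2 : F) ≠ 0 :=
  Ring.two_ne_zero fun hchar =>
    Nat.not_even_iff_odd.mpr h (Nat.even_iff.mpr (FiniteField.even_card_iff_char_two.mp hchar))

section HyperbolicPlane

variable {F : Type*} [Field F]

def sqSubSqEquivMul (h2 : (2 : F) ≠ 0) (b : F) :
    {p : F × F // p.1 ^ 2 - p.2 ^ 2 = b} ≃ {p : F × F // p.1 * p.2 = b} :=
  (Equiv.mk (fun p : F × F => (p.1 + p.2, p.1 - p.2))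
      (fun p => ((p.1 + p.2) / 2, (p.1 - p.2) / 2))
      (fun p => by ext <;> dsimp only <;> field_simp <;> ring)
      (fun p => by ext <;> dsimp only <;> field_simp <;> ring)).subtypeEquiv
    fun p => by rw [sq_sub_sq]; rfl

variable [Fintype F]

lemma card_mul_eq_add_one [DecidableEq F] (b : F) :
    Nat.card {p : F × F // p.1 * p.2 = b} + 1 =
      Fintype.card F + if b = 0 then Fintype.card F else 0 := by
  have fiber (x : F) : Nat.card {y : F // x * y = b} =
      if x = 0 then (if b = 0 then Fintype.card F else 0) else 1 := by
    split_ifs with hx hb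
    · simp [hx, hb]
    · simp [hx, Ne.symm hb]
    · rw [Nat.card_eq_one_iff_exists]
      refine ⟨⟨x⁻¹ * b, by field_simp⟩, fun y => Subtype.ext ?_⟩
      field_simp
      linear_combination y.2
  rw [Nat.card_congr (Equiv.subtypeProdEquivSigmaSubtype fun x y => x * y = b),
    Nat.card_sigma, Finset.sum_congr rfl fun x _ => fiber x,
    ← Finset.add_sum_erase _ _ (Finset.mem_univ 0),
    Finset.sum_congr rfl fun x hx => if_neg (Finset.ne_of_mem_erase hx)]
  simp only [if_pos, Finset.sum_const, Finset.card_erase_of_mem (Finset.mem_univ _),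
    Finset.card_univ, smul_eq_mul, mul_one]
  have := Fintype.card_pos (α := F)
  omega

lemma card_sq_sub_sq_add_one [DecidableEq F] (h2 : (2 : F) ≠ 0) (b : F) :
    Nat.card {p : F × F // p.1 ^ 2 - p.2 ^ 2 = b} + 1 =
      Fintype.card F + if b = 0 then Fintype.card F else 0 := by
  rw [Nat.card_congr (sqSubSqEquivMul h2 b), card_mul_eq_add_one]

lemma card_sq_sub_sq_add_eq_zero_add_card {W : Type*} [Fintype W] (h2 : (2 : F) ≠ 0)
    (g : W → F) :
    Nat.card {t : W × F × F // t.2.1 ^ 2 - t.2.2 ^ 2 + g t.1 = 0} + Fintype.card W =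
      Fintype.card F * Fintype.card W + Fintype.card F * Nat.card {w // g w = 0} := by
  classical
  have fiber (w : W) : Nat.card {p : F × F // p.1 ^ 2 - p.2 ^ 2 + g w = 0} + 1 =
      Fintype.card F + if g w = 0 then Fintype.card F else 0 := by
    simp_rw [← eq_neg_iff_add_eq_zero, card_sq_sub_sq_add_one h2, neg_eq_zero]
  rw [Nat.card_congr
      (Equiv.subtypeProdEquivSigmaSubtype fun w (p : F × F) => p.1 ^ 2 - p.2 ^ 2 + g w = 0),
    Nat.card_sigma]
  calc ∑ w, Nat.card {p : F × F // p.1 ^ 2 - p.2 ^ 2 + g w = 0} + Fintype.card W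
      = ∑ w, (Nat.card {p : F × F // p.1 ^ 2 - p.2 ^ 2 + g w = 0} + 1) := by
        simp [Finset.sum_add_distrib]
    _ = ∑ w, (Fintype.card F + if g w = 0 then Fintype.card F else 0) :=
        Finset.sum_congr rfl fun w _ => fiber w
    _ = _ := by
        simp [Finset.sum_add_distrib, Finset.sum_ite, Nat.card_eq_fintype_card,
          Fintype.card_subtype, mul_comm]

end HyperbolicPlane

lemma Nat.card_subtype_ne_zero_add_one {V : Type*} [Zero V] [Finite V] {p : V → Prop}
    (hp : p 0) : Nat.card {v : {v : V // v ≠ 0} // p v} + 1 = Nat.card {v // p v} := by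
  rw [Nat.card_congr (Equiv.subtypeSubtypeEquivSubtypeInter (· ≠ 0) p),
    Nat.card_congr (Equiv.subtypeEquivRight fun v => by simp [and_comm] :
      {v // v ≠ 0 ∧ p v} ≃ ({v | p v} \ {0} : Set V)),
    Nat.card_coe_set_eq, Set.ncard_sdiff_singleton_add_one (s := {v | p v}) hp]
  rfl

lemma Projectivization.card_subtype_rep_mul_add_one {k V : Type*} [DivisionRing k]
    [AddCommGroup V] [Module k V] [Finite V] {p : V → Prop} (hp0 : p 0)
    (hp : ∀ (c : kˣ) (v : V), p (c • v) ↔ p v) :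
    Nat.card {P : ℙ k V // p P.rep} * (Nat.card k - 1) + 1 = Nat.card {v // p v} := by
  have mk_rep_iff (v : {v : V // v ≠ 0}) : p (mk k v.1 v.2).rep ↔ p v := by
    obtain ⟨a, ha⟩ := exists_smul_eq_mk_rep k v.1 v.2
    rw [← ha, hp]
  rw [← Nat.card_subtype_ne_zero_add_one hp0, ← Nat.card_units, ← Nat.card_prod,
    ← Nat.card_congr Equiv.prodSubtypeFstEquivSubtypeProd,
    Nat.card_congr ((nonZeroEquivProjectivizationProdUnits k V).subtypeEquiv
      (q := fun t => p t.1.rep) fun v => (mk_rep_iff v).symm)]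

section Qn

variable {F : Type} [Field F]

lemma Qn_smul (n : ℕ) (α c : F) (v : Fin (n + 1) → F) :
    Qn F n α (c • v) = c ^ 2 * Qn F n α v := by
  simp only [Qn, Finset.mul_sum, Pi.smul_apply, smul_eq_mul]
  exact Finset.sum_congr rfl fun i _ => by ring

lemma Qn_cons_cons (m : ℕ) (α x y : F) (w : Fin (m + 1) → F) :
    Qn F (m + 2) α (Fin.cons x (Fin.cons y w)) = x ^ 2 - y ^ 2 + Qn F m α w := by
  simp only [Qn, Fin.sum_univ_succ (n := m + 2), Fin.sum_univ_succ (n := m + 1)]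
  simp [pow_succ, sub_eq_add_neg, add_assoc]

lemma Qn_one_eq_zero_iff {α : F} (hα : ¬ IsSquare α) (v : Fin 2 → F) :
    Qn F 1 α v = 0 ↔ v = 0 := by
  refine ⟨fun h => ?_, fun h => by simp [h, Qn]⟩
  have h' : v 0 ^ 2 - α * v 1 ^ 2 = 0 := by simpa [Qn, Fin.sum_univ_two, sub_eq_add_neg] using h
  have hv1 : v 1 = 0 := by
    by_contra hv1
    exact hα ⟨v 0 / v 1, by field_simp; linear_combination -h'⟩
  have hv0 : v 0 = 0 := by simpa [hv1] using h'
  ext i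
  fin_cases i <;> simp [hv0, hv1]

variable [Fintype F]

lemma card_Qn_add_two_add_pow (h2 : (2 : F) ≠ 0) (m : ℕ) (α : F) :
    Nat.card {v : Fin (m + 2 + 1) → F // Qn F (m + 2) α v = 0} + Fintype.card F ^ (m + 1) =
      Fintype.card F ^ (m + 2) + Fintype.card F * Nat.card {w // Qn F m α w = 0} := by
  let e : (Fin (m + 1) → F) × F × F ≃ (Fin (m + 2 + 1) → F) :=
    (Equiv.prodComm _ _).trans <| (Equiv.prodAssoc F F _).trans <|
      (Equiv.prodCongr (Equiv.refl F) (Fin.consEquiv fun _ => F)).trans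
        (Fin.consEquiv fun _ => F)
  have he (t : (Fin (m + 1) → F) × F × F) :
      t.2.1 ^ 2 - t.2.2 ^ 2 + Qn F m α t.1 = 0 ↔ Qn F (m + 2) α (e t) = 0 := by
    show _ ↔ Qn F (m + 2) α (Fin.cons t.2.1 (Fin.cons t.2.2 t.1)) = 0
    rw [Qn_cons_cons]
  rw [← Nat.card_congr (e.subtypeEquiv he)]
  simpa [pow_succ, mul_comm] using card_sq_sub_sq_add_eq_zero_add_card h2 (Qn F m α)

lemma card_Qn_eq_zero_add_pow (h2 : (2 : F) ≠ 0) {α : F} (hα : ¬ IsSquare α) (k : ℕ) :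
    Nat.card {v : Fin (2 * k + 1 + 1) → F // Qn F (2 * k + 1) α v = 0} +
        Fintype.card F ^ (k + 1) =
      Fintype.card F ^ (2 * k + 1) + Fintype.card F ^ k := by
  induction k with
  | zero =>
    rw [Nat.card_congr (Equiv.subtypeEquivRight (Qn_one_eq_zero_iff hα)), Nat.card_unique]
    simp [add_comm]
  | succ k ih =>
    have step := card_Qn_add_two_add_pow h2 (2 * k + 1) α
    rw [show 2 * (k + 1) + 1 = 2 * k + 1 + 2 by ring]
    linear_combination step + Fintype.card F * ih

end Qn

/-- For `n` odd and `α` a non-square, the number of isotropic points of `PG(n,q)`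
is `q^{n-1} + ⋯ + q + 1 - q^{(n-1)/2}`. -/
theorem stmt3 (F : Type) [Field F] [Fintype F] (q n : ℕ)
    (hq : Fintype.card F = q) (hodd : Odd q) (hn : Odd n)
    (α : F) (hα : ¬ IsSquare α) :
    Nat.card {P : Projectivization F (Fin (n + 1) → F) // Qn F n α P.rep = 0} =
      (∑ i ∈ Finset.range n, q ^ i) - q ^ ((n - 1) / 2) := by
  obtain ⟨k, rfl⟩ := hn
  obtain ⟨r, rfl⟩ : ∃ r, q = r + 1 := ⟨q - 1, by have := hodd.pos; omega⟩
  have hr : 0 < r := by have := Fintype.one_lt_card (α := F); omega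
  have vectors := card_Qn_eq_zero_add_pow (FiniteField.two_ne_zero_of_odd_card (hq ▸ hodd)) hα k
  have points := Projectivization.card_subtype_rep_mul_add_one (k := F)
    (p := fun v => Qn F (2 * k + 1) α v = 0) (by simp [Qn])
    fun c v => by simp [Units.smul_def, Qn_smul]
  have geom := geom_sum_mul_add r (2 * k + 1)
  rw [Nat.card_eq_fintype_card (α := F), hq, Nat.add_sub_cancel] at points
  rw [hq] at vectors
  rw [Nat.add_sub_cancel, Nat.mul_div_cancel_left k two_pos]
  refine Nat.eq_sub_of_add_eq (Nat.eq_of_mul_eq_mul_right hr ?_)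
  zify at vectors points geom ⊢
  linear_combination points + vectors - geom
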